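/- arXiv:2105.12021 — 2 statements merged into one kernel-verified Lean document; each statement's English description precedes it below -/
import Mathlib

section
/- (Barker–Carlson extreme ray characterization of diagonally dominant matrices) A real symmetric n×n matrix M is diagonally dominant, i.e., M_{ii} ≥ Σ_{j≠i} |M_{ij}| for every i, if and only if M can be written as M = Σ_i α_i v_i v_iᵀ, a finite sum where each α_i ≥ 0 and each v_i ∈ ℝⁿ is a nonzero vector with at most 2 nonzero components, each nonzero component equal to +1 or −1. -/
/-!
Diagonally dominant matrices form a convex cone, and it contains `v vᵀ` whenever `v` has at most
two nonzero entries, each `±1`. Conversely, with `rᵢ = ∑_{j ≠ i} |M i j|` and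
`vᵢⱼ = eᵢ + sign (M i j) eⱼ`, a symmetric diagonally dominant `M` decomposes as
`M = ∑ᵢ (M i i - rᵢ) eᵢ eᵢᵀ + ∑_{i ≠ j} (|M i j| / 2) vᵢⱼ vᵢⱼᵀ`,
whose coefficients are nonnegative by dominance; symmetry lets the ordered pairs `(i, j)` and
`(j, i)` each supply half of the entry `M i j`.
-/

open Finset

namespace Matrix

variable {ι : Type*}

section Cone

variable {R : Type*} [Ring R] [LinearOrder R] [IsStrictOrderedRing R]

theorem sum_abs_eq_card_support [Fintype ι] {v : ι → R}
    (hv : ∀ j, v j = 0 ∨ v j = 1 ∨ v j = -1) : ∑ j, |v j| = #{j | v j ≠ 0} := by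
  rw [natCast_card_filter]
  refine sum_congr rfl fun j _ => ?_
  rcases hv j with h | h | h <;> simp [h]

variable [Fintype ι] [DecidableEq ι]

def IsDiagDominant (M : Matrix ι ι R) : Prop :=
  ∀ i, ∑ j ∈ univ.erase i, |M i j| ≤ M i i

theorem isDiagDominant_zero : IsDiagDominant (0 : Matrix ι ι R) := fun i => by simp

theorem IsDiagDominant.add {M N : Matrix ι ι R} (hM : M.IsDiagDominant) (hN : N.IsDiagDominant) :
    (M + N).IsDiagDominant := fun i =>
  calc ∑ j ∈ univ.erase i, |(M + N) i j|
      ≤ ∑ j ∈ univ.erase i, (|M i j| + |N i j|) := sum_le_sum fun j _ => abs_add_le _ _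
    _ ≤ (M + N) i i := by rw [sum_add_distrib, add_apply]; exact add_le_add (hM i) (hN i)

theorem IsDiagDominant.smul {M : Matrix ι ι R} (hM : M.IsDiagDominant) {c : R} (hc : 0 ≤ c) :
    (c • M).IsDiagDominant := fun i => by
  simp only [smul_apply, smul_eq_mul, abs_mul, abs_of_nonneg hc, ← mul_sum]
  exact mul_le_mul_of_nonneg_left (hM i) hc

theorem IsDiagDominant.sum {κ : Type*} {s : Finset κ} {M : κ → Matrix ι ι R}
    (h : ∀ k ∈ s, (M k).IsDiagDominant) : (∑ k ∈ s, M k).IsDiagDominant :=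
  sum_induction M IsDiagDominant (fun _ _ => .add) isDiagDominant_zero h

theorem sum_erase_abs_le_one {v : ι → R} (hcard : #{j | v j ≠ 0} ≤ 2)
    (hv : ∀ j, v j = 0 ∨ v j = 1 ∨ v j = -1) {k : ι} (hk : |v k| = 1) :
    ∑ j ∈ univ.erase k, |v j| ≤ 1 := by
  rw [sum_erase_eq_sub (mem_univ k), sum_abs_eq_card_support hv, hk, sub_le_iff_le_add,
    one_add_one_eq_two]
  exact_mod_cast hcard

theorem isDiagDominant_vecMulVec_self {v : ι → R} (hcard : #{j | v j ≠ 0} ≤ 2)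
    (hv : ∀ j, v j = 0 ∨ v j = 1 ∨ v j = -1) : (vecMulVec v v).IsDiagDominant := by
  intro k
  simp only [vecMulVec_apply, abs_mul, ← mul_sum]
  rcases hv k with hk | hk | hk
  · simp [hk]
  all_goals simpa [hk] using sum_erase_abs_le_one hcard hv (k := k) (by simp [hk])

end Cone

section Decomposition

variable {𝕜 : Type*} [Field 𝕜] [LinearOrder 𝕜] [DecidableEq ι]

-- The pair `(i, i)` indexes the diagonal term `eᵢ eᵢᵀ` of the decomposition.
def ddVector (M : Matrix ι ι 𝕜) (p : ι × ι) : ι → 𝕜 := fun k =>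
  if k = p.1 then 1 else if k = p.2 then (SignType.sign (M p.1 p.2) : 𝕜) else 0

variable {M : Matrix ι ι 𝕜}

@[simp]
theorem ddVector_apply_self (i j : ι) : ddVector M (i, j) i = 1 := if_pos rfl

theorem ddVector_apply_of_ne {i j : ι} (h : i ≠ j) :
    ddVector M (i, j) j = SignType.sign (M i j) := by
  simp [ddVector, h.symm]

theorem ddVector_ne_zero (p : ι × ι) : ddVector M p ≠ 0 :=
  fun h => by simpa [ddVector] using congrFun h p.1

theorem ddVector_apply_eq_zero_or_one_or_neg_one (p : ι × ι) (k : ι) :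
    ddVector M p k = 0 ∨ ddVector M p k = 1 ∨ ddVector M p k = -1 := by
  unfold ddVector
  split_ifs
  · simp
  · rcases SignType.sign (M p.1 p.2) with _ | _ | _ <;> simp
  · simp

theorem ddVector_mul_ddVector_eq_zero {p : ι × ι} {k l : ι} (hkl : k ≠ l) (hp : p ≠ (k, l))
    (hp' : p ≠ (l, k)) : ddVector M p k * ddVector M p l = 0 := by
  obtain ⟨i, j⟩ := p
  simp only [ddVector]
  split_ifs <;> simp_all

variable [Fintype ι]

theorem card_ddVector_support_le_two (p : ι × ι) : #{k | ddVector M p k ≠ 0} ≤ 2 := by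
  refine (card_le_card (t := {p.1, p.2}) fun k hk => ?_).trans card_le_two
  by_contra hk'
  simp only [mem_insert, mem_singleton, not_or] at hk'
  exact (mem_filter.1 hk).2 (by simp [ddVector, hk'.1, hk'.2])

def ddCoeff (M : Matrix ι ι 𝕜) (p : ι × ι) : 𝕜 :=
  if p.1 = p.2 then M p.1 p.1 - ∑ j ∈ univ.erase p.1, |M p.1 j| else |M p.1 p.2| / 2

theorem ddCoeff_self (i : ι) : ddCoeff M (i, i) = M i i - ∑ j ∈ univ.erase i, |M i j| :=
  if_pos rfl

theorem ddCoeff_of_ne {i j : ι} (h : i ≠ j) : ddCoeff M (i, j) = |M i j| / 2 := if_neg h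

variable [IsStrictOrderedRing 𝕜]

theorem IsDiagDominant.ddCoeff_nonneg (hM : M.IsDiagDominant) (p : ι × ι) : 0 ≤ ddCoeff M p := by
  unfold ddCoeff
  split_ifs
  · exact sub_nonneg.mpr (hM p.1)
  · positivity

theorem sum_ddCoeff_mul_ddVector_mul_self (hM : M.IsSymm) (k : ι) :
    ∑ p, ddCoeff M p * (ddVector M p k * ddVector M p k) = M k k := by
  have hrow : ∑ j, ddCoeff M (k, j) * (ddVector M (k, j) k * ddVector M (k, j) k) =
      M k k - (∑ j ∈ univ.erase k, |M k j|) / 2 := by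
    simp only [ddVector_apply_self, mul_one]
    rw [← add_sum_erase _ _ (mem_univ k), ddCoeff_self,
      sum_congr rfl fun j hj => ddCoeff_of_ne (ne_of_mem_erase hj).symm, ← sum_div]
    ring
  have hcol : ∀ i ∈ univ.erase k,
      ∑ j, ddCoeff M (i, j) * (ddVector M (i, j) k * ddVector M (i, j) k) = |M k i| / 2 := by
    intro i hi
    have hik := ne_of_mem_erase hi
    rw [sum_eq_single k (fun j _ hjk => by simp [ddVector, hik.symm, hjk.symm]) (by simp),
      ddCoeff_of_ne hik, ddVector_apply_of_ne hik, hM.apply]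
    linear_combination (SignType.sign (M k i) : 𝕜) / 2 * abs_mul_sign (M k i) +
      self_mul_sign (M k i) / 2
  rw [Fintype.sum_prod_type, ← add_sum_erase _ _ (mem_univ k), hrow, sum_congr rfl hcol,
    ← sum_div]
  ring

theorem sum_ddCoeff_mul_ddVector_mul_of_ne (hM : M.IsSymm) {k l : ι} (hkl : k ≠ l) :
    ∑ p, ddCoeff M p * (ddVector M p k * ddVector M p l) = M k l := by
  rw [Fintype.sum_eq_add (k, l) (l, k) (fun h => hkl (congrArg Prod.fst h))
    fun p hp => by rw [ddVector_mul_ddVector_eq_zero hkl hp.1 hp.2, mul_zero]]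
  simp only [ddCoeff_of_ne hkl, ddCoeff_of_ne hkl.symm, ddVector_apply_self,
    ddVector_apply_of_ne hkl, ddVector_apply_of_ne hkl.symm, hM.apply k l]
  linear_combination abs_mul_sign (M k l)

theorem sum_ddCoeff_smul_vecMulVec (hM : M.IsSymm) :
    ∑ p, ddCoeff M p • vecMulVec (ddVector M p) (ddVector M p) = M := by
  ext k l
  simp only [sum_apply, smul_apply, vecMulVec_apply, smul_eq_mul]
  rcases eq_or_ne k l with rfl | hkl
  · exact sum_ddCoeff_mul_ddVector_mul_self hM k
  · exact sum_ddCoeff_mul_ddVector_mul_of_ne hM hkl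

end Decomposition

end Matrix

open Matrix

/-- Barker–Carlson: a real symmetric `n × n` matrix `M` is
diagonally dominant, i.e. `M i i ≥ ∑_{j ≠ i} |M i j|` for all `i`, iff `M` is a
finite conic combination `M = ∑ α_i v_i v_iᵀ` where each `α_i ≥ 0` and each
`v_i ∈ ℝⁿ` is a nonzero vector with at most 2 nonzero components, each equal
to `+1` or `−1`. -/
theorem diagonally_dominant_iff_conic_combination_pm_one_vectors
    (n : ℕ) (M : Matrix (Fin n) (Fin n) ℝ) (hM : Mᵀ = M) :
    (∀ i, ∑ j ∈ Finset.univ.erase i, |M i j| ≤ M i i) ↔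
      ∃ (m : ℕ) (α : Fin m → ℝ) (v : Fin m → (Fin n → ℝ)),
        (∀ i, 0 ≤ α i) ∧
        (∀ i, v i ≠ 0) ∧
        (∀ i, (Finset.univ.filter (fun j => v i j ≠ 0)).card ≤ 2) ∧
        (∀ i j, v i j = 0 ∨ v i j = 1 ∨ v i j = -1) ∧
        M = ∑ i, α i • Matrix.vecMulVec (v i) (v i) := by
  constructor
  · intro hdd
    let e : Fin n × Fin n ≃ Fin (n * n) := finProdFinEquiv
    refine ⟨n * n, ddCoeff M ∘ e.symm, ddVector M ∘ e.symm,
      fun _ => IsDiagDominant.ddCoeff_nonneg hdd _, fun _ => ddVector_ne_zero _,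
      fun _ => card_ddVector_support_le_two _,
      fun _ => ddVector_apply_eq_zero_or_one_or_neg_one _, ?_⟩
    exact ((e.symm.sum_comp _).trans (sum_ddCoeff_smul_vecMulVec hM)).symm
  · rintro ⟨m, α, v, hα, -, hcard, hpm, rfl⟩
    exact IsDiagDominant.sum fun i _ =>
      (isDiagDominant_vecMulVec_self (hcard i) (hpm i)).smul (hα i)
end

section
/- (Chordal decomposition of sparse PSD matrices) Let G be an undirected simple graph on the vertex set {1,…,n} that is chordal, i.e., every cycle of length at least 4 has a chord (an edge joining two non-consecutive vertices of the cycle). Let C_1,…,C_p be the maximal cliques of G. Let X be a real symmetric n×n matrix with sparsity pattern G, i.e., X_{ij} = 0 whenever i ≠ j and {i,j} is not an edge of G. Then X is positive semidefinite if and only if there exist real symmetric n×n matrices X_1,…,X_p such that X = Σ_{k=1}^{p} X_k, each X_k is positive semidefinite, and each X_k satisfies (X_k)_{ij} = 0 whenever (i,j) ∉ C_k × C_k. -/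
/-!
A simplicial vertex `v` of a chordal graph, one whose neighbourhood is a clique, is eliminated as
in a Cholesky factorisation: `X = (X v v)⁻¹ (X v)(X v)ᵀ + Y`. The rank-one term is PSD and
supported on the clique `{v} ∪ N(v)`; the Schur complement `Y` is PSD, keeps the sparsity pattern
and vanishes on row and column `v`. Iterating over the vertices writes `X` as a sum of PSD matrices
supported on cliques, and each clique lies in a maximal one.

Simplicial vertices exist by Dirac's argument. If `W` is not a clique, pick non-adjacent
`a, b ∈ W` and a minimal separator `S` of them. `S` is a clique: two non-adjacent vertices of `S`,
joined by chordless paths through the component of `a` and through that of `b`, would span a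
chordless cycle of length at least 4. Induction on `A ∪ S`, with `A` the component of `a`, then
gives a vertex of `A` simplicial in `W`.
-/

open Matrix

def IsChordalGraph {V : Type*} (G : SimpleGraph V) : Prop :=
  ∀ (v : V) (w : G.Walk v v), w.IsCycle → 4 ≤ w.length →
    ∃ a b : V, a ∈ w.support ∧ b ∈ w.support ∧ G.Adj a b ∧ s(a, b) ∉ w.edges

def IsMaximalClique {V : Type*} (G : SimpleGraph V) (s : Finset V) : Prop :=
  G.IsClique ↑s ∧ ∀ t : Finset V, G.IsClique ↑t → s ⊆ t → t = s

namespace SimpleGraph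

variable {V : Type*} {G : SimpleGraph V} {s t : Set V} {u v w x : V}

namespace Walk

lemma exists_shorter_of_isChord {p : G.Walk u v} {e : Sym2 V} (h : p.IsChord e) :
    ∃ q : G.Walk u v, q.support ⊆ p.support ∧ q.length < p.length := by
  induction e using Sym2.ind with | h a b => ?_
  obtain ⟨hab, hnot, ha, hb⟩ := isChord_sym2Mk.1 h
  obtain ⟨i, rfl, hi⟩ := mem_support_iff_exists_getVert.1 ha
  obtain ⟨j, rfl, hj⟩ := mem_support_iff_exists_getVert.1 hb
  clear h ha hb
  wlog hij : i ≤ j generalizing i j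
  · exact this j hj i hi hab.symm (by rwa [Sym2.eq_swap]) (by omega)
  have hne : i ≠ j := by rintro rfl; exact hab.ne rfl
  have hsucc : i + 1 ≠ j := by
    rintro rfl
    exact hnot (p.mk_mem_edges_iff_exists.2 ⟨i, by omega, rfl⟩)
  refine ⟨(p.take i).append (.cons hab (p.drop j)), ?_, ?_⟩
  · intro z hz
    simp only [support_append, support_cons, List.tail_cons, support_take,
      drop_support_eq_support_drop_min, List.mem_append] at hz
    exact hz.elim (fun h => List.take_subset _ _ h) (fun h => List.drop_subset _ _ h)
  · simp only [length_append, length_cons, take_length, drop_length]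
    omega

lemma IsPath.ne_start_of_mem_tail {p : G.Walk u v} (hp : p.IsPath) (hx : x ∈ p.support.tail) :
    x ≠ u := by
  have := hp.support_nodup
  rw [← p.cons_tail_support] at this
  rintro rfl
  exact (List.nodup_cons.1 this).1 hx

lemma one_lt_length_of_not_adj (p : G.Walk u v) (hne : u ≠ v) (hadj : ¬G.Adj u v) :
    1 < p.length := by
  have h0 : p.length ≠ 0 := fun h => hne (eq_of_length_eq_zero h)
  have h1 : p.length ≠ 1 := fun h => hadj (adj_of_length_eq_one h)
  omega

end Walk

def ReachableIn (G : SimpleGraph V) (s : Set V) (u v : V) : Prop :=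
  ∃ p : G.Walk u v, ∀ z ∈ p.support, z ∈ s

namespace ReachableIn

lemma refl (hu : u ∈ s) : G.ReachableIn s u u := ⟨.nil, by simpa⟩

lemma symm (h : G.ReachableIn s u v) : G.ReachableIn s v u :=
  let ⟨p, hp⟩ := h
  ⟨p.reverse, by simpa⟩

lemma trans (h : G.ReachableIn s u v) (h' : G.ReachableIn s v w) : G.ReachableIn s u w :=
  let ⟨p, hp⟩ := h
  let ⟨q, hq⟩ := h'
  ⟨p.append q, by simp only [Walk.mem_support_append_iff]; grind⟩

lemma mono (h : G.ReachableIn s u v) (hst : s ⊆ t) : G.ReachableIn t u v :=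
  let ⟨p, hp⟩ := h
  ⟨p, fun z hz => hst (hp z hz)⟩

lemma mem_left (h : G.ReachableIn s u v) : u ∈ s :=
  let ⟨p, hp⟩ := h
  hp u p.start_mem_support

lemma mem_right (h : G.ReachableIn s u v) : v ∈ s := h.symm.mem_left

lemma adj (h : G.ReachableIn s u v) (hvw : G.Adj v w) (hw : w ∈ s) : G.ReachableIn s u w :=
  h.trans ⟨hvw.toWalk, by simp [h.mem_right, hw]⟩

lemma reachableIn_setOf (h : G.ReachableIn s u v) :
    G.ReachableIn {z | G.ReachableIn s u z} u v := by
  classical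
  obtain ⟨p, hp⟩ := h
  exact ⟨p, fun z hz =>
    ⟨p.takeUntil z hz, fun y hy => hp y (p.support_takeUntil_subset_support hz hy)⟩⟩

lemma exists_isPath_isChordless (h : G.ReachableIn s u v) :
    ∃ p : G.Walk u v, p.IsPath ∧ p.IsChordless ∧ ∀ z ∈ p.support, z ∈ s := by
  classical
  have hex : ∃ n, ∃ p : G.Walk u v, p.length = n ∧ ∀ z ∈ p.support, z ∈ s :=
    let ⟨p, hp⟩ := h
    ⟨_, p, rfl, hp⟩
  obtain ⟨p, hpn, hps⟩ := Nat.find_spec hex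
  have hmin : ∀ q : G.Walk u v, (∀ z ∈ q.support, z ∈ s) → p.length ≤ q.length :=
    fun q hq => hpn ▸ Nat.find_min' hex ⟨q, rfl, hq⟩
  have hbs : ∀ z ∈ p.bypass.support, z ∈ s :=
    fun z hz => hps z (p.support_bypass_subset_support hz)
  refine ⟨p.bypass, p.bypass_isPath, fun e he => ?_, hbs⟩
  obtain ⟨q, hqs, hql⟩ := Walk.exists_shorter_of_isChord he
  have := hmin q fun z hz => hbs z (hqs hz)
  have := p.length_bypass_le_length
  omega

end ReachableIn

lemma not_reachableIn_pair (hne : u ≠ v) (hadj : ¬G.Adj u v) : ¬G.ReachableIn {u, v} u v := by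
  rintro ⟨p, hp⟩
  obtain ⟨d, hd, hfst, hsnd⟩ := p.exists_boundary_dart {u} rfl hne.symm
  simp only [Set.mem_singleton_iff] at hfst hsnd
  rcases hp _ (p.dart_snd_mem_support_of_mem_darts hd) with h | h
  · exact hsnd h
  · exact hadj (hfst ▸ h ▸ d.adj)

def IsSimplicialIn (G : SimpleGraph V) (W : Set V) (v : V) : Prop :=
  G.IsClique (W ∩ G.neighborSet v)

structure IsMinimalSeparator (G : SimpleGraph V) (W S : Set V) (a b : V) : Prop where
  left_notMem : a ∉ S
  right_notMem : b ∉ S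
  not_reachableIn : ¬G.ReachableIn (W \ S) a b
  reachableIn_of_mem : ∀ s ∈ S, G.ReachableIn (W \ (S \ {s})) a b

namespace IsMinimalSeparator

variable {W S : Set V} {a b : V}

lemma symm (hS : G.IsMinimalSeparator W S a b) : G.IsMinimalSeparator W S b a :=
  ⟨hS.right_notMem, hS.left_notMem, fun h => hS.not_reachableIn h.symm,
    fun s hs => (hS.reachableIn_of_mem s hs).symm⟩

lemma exists_adj (hS : G.IsMinimalSeparator W S a b) (hs : v ∈ S) :
    ∃ t, G.ReachableIn (W \ S) a t ∧ G.Adj v t := by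
  obtain ⟨p, hp⟩ := hS.reachableIn_of_mem v hs
  have ha : a ∈ W \ S := ⟨(hp a p.start_mem_support).1, hS.left_notMem⟩
  obtain ⟨d, hd, hfst, hsnd⟩ := p.exists_boundary_dart {t | G.ReachableIn (W \ S) a t}
    (ReachableIn.refl ha) hS.not_reachableIn
  obtain ⟨hW, hS'⟩ := hp _ (p.dart_snd_mem_support_of_mem_darts hd)
  by_cases hdS : d.snd ∈ S
  · have hdv : d.snd = v := by_contra fun h => hS' ⟨hdS, h⟩
    exact ⟨d.fst, hfst, hdv ▸ d.adj.symm⟩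
  · exact absurd (ReachableIn.adj hfst d.adj ⟨hW, hdS⟩) hsnd

lemma reachableIn_insert_insert (hS : G.IsMinimalSeparator W S a b) (hu : u ∈ S) (hv : v ∈ S) :
    G.ReachableIn (insert u (insert v {t | G.ReachableIn (W \ S) a t})) u v := by
  obtain ⟨t, ht, hut⟩ := hS.exists_adj hu
  obtain ⟨t', ht', hvt'⟩ := hS.exists_adj hv
  have htt' := ht.reachableIn_setOf.symm.trans ht'.reachableIn_setOf
  refine ((htt'.mono ?_).symm.adj hut.symm (by simp)).symm.adj hvt'.symm (by simp)
  exact (Set.subset_insert _ _).trans (Set.subset_insert _ _)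

lemma exists_component [DecidableEq V] {W S : Finset V} (hS : G.IsMinimalSeparator W S a b)
    (hSW : S ⊆ W) (ha : a ∈ W) (hb : b ∈ W) :
    ∃ A : Finset V, A ∪ S ⊂ W ∧ a ∈ A ∧ ∀ x ∈ A, G.ReachableIn (↑W \ ↑S) a x ∧
      (G.IsSimplicialIn ↑(A ∪ S) x → G.IsSimplicialIn W x) := by
  classical
  have haS : a ∉ S := hS.left_notMem
  have hbS : b ∉ S := hS.right_notMem
  refine ⟨W.filter (G.ReachableIn (↑W \ ↑S) a), ?_, ?_, fun x hx => ?_⟩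
  · refine (Finset.ssubset_iff_of_subset (Finset.union_subset (W.filter_subset _) hSW)).2
      ⟨b, hb, ?_⟩
    simp [hS.not_reachableIn, hbS]
  · simpa [ha] using ReachableIn.refl (show a ∈ (↑W \ ↑S : Set V) from ⟨ha, haS⟩)
  have hax := (Finset.mem_filter.1 hx).2
  refine ⟨hax, fun hsx => hsx.subset ?_⟩
  rintro w ⟨hwW, hxw⟩
  refine ⟨?_, hxw⟩
  by_cases hwS : w ∈ S
  · exact Finset.mem_union_right _ hwS
  · exact Finset.mem_union_left _ (Finset.mem_filter.2 ⟨hwW, hax.adj hxw ⟨hwW, hwS⟩⟩)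

end IsMinimalSeparator

lemma exists_isMinimalSeparator (W : Finset V) {a b : V} (hab : a ≠ b)
    (hadj : ¬G.Adj a b) : ∃ S ⊆ W, G.IsMinimalSeparator W S a b := by
  classical
  let seps := (W \ {a, b}).powerset.filter fun S : Finset V => ¬G.ReachableIn (↑W \ ↑S) a b
  have hall : W \ {a, b} ∈ seps := by
    refine Finset.mem_filter.2 ⟨Finset.mem_powerset_self _, fun h => ?_⟩
    refine not_reachableIn_pair hab hadj (h.mono fun z hz => ?_)
    simp only [Finset.coe_sdiff, Set.mem_sdiff, Finset.mem_coe, Finset.coe_insert,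
      Finset.coe_singleton, not_and, not_not] at hz
    exact hz.2 hz.1
  obtain ⟨S, hS, hmin⟩ := seps.exists_min_image Finset.card ⟨_, hall⟩
  rw [Finset.mem_filter, Finset.mem_powerset] at hS
  have hSab : ∀ z ∈ S, z ∈ W ∧ z ≠ a ∧ z ≠ b := fun z hz => by
    simpa [not_or] using hS.1 hz
  refine ⟨S, fun z hz => (hSab z hz).1, fun ha => (hSab a ha).2.1 rfl,
    fun hb => (hSab b hb).2.2 rfl, hS.2, fun s hs => ?_⟩
  by_contra h
  have hmem : S.erase s ∈ seps := by
    refine Finset.mem_filter.2 ⟨Finset.mem_powerset.2 ((S.erase_subset s).trans hS.1), ?_⟩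
    rwa [Finset.coe_erase]
  exact (hmin _ hmem).not_gt (Finset.card_erase_lt_of_mem hs)

end SimpleGraph

open SimpleGraph

namespace IsChordalGraph

variable {V : Type*} {G : SimpleGraph V} {x y : V}

theorem adj_of_reachableIn (hG : IsChordalGraph G) {A B : Set V} (hxy : x ≠ y)
    (hAB : Disjoint A B) (hnadj : ∀ a ∈ A, ∀ b ∈ B, ¬G.Adj a b)
    (hA : G.ReachableIn (insert x (insert y A)) x y)
    (hB : G.ReachableIn (insert x (insert y B)) x y) : G.Adj x y := by
  by_contra hxy'
  obtain ⟨p, hp, hpc, hps⟩ := hA.exists_isPath_isChordless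
  obtain ⟨q, hq, hqc, hqs⟩ := hB.exists_isPath_isChordless
  have only_p : ∀ z ∈ p.support, z ∉ q.support → z ∈ A := by
    intro z hzp hzq
    rcases hps z hzp with rfl | rfl | hz
    exacts [absurd q.start_mem_support hzq, absurd q.end_mem_support hzq, hz]
  have only_q : ∀ z ∈ q.support, z ∉ p.support → z ∈ B := by
    intro z hzq hzp
    rcases hqs z hzq with rfl | rfl | hz
    exacts [absurd p.start_mem_support hzp, absurd p.end_mem_support hzp, hz]
  have hdisj : p.support.tail.Disjoint q.reverse.support.tail := by
    intro z hzp hzq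
    have hzx := hp.ne_start_of_mem_tail hzp
    have hzy := hq.reverse.ne_start_of_mem_tail hzq
    rcases hps z (List.mem_of_mem_tail hzp) with rfl | rfl | hzA
    · exact hzx rfl
    · exact hzy rfl
    rcases hqs z (by simpa using List.mem_of_mem_tail hzq) with rfl | rfl | hzB
    · exact hzx rfl
    · exact hzy rfl
    exact hAB.ne_of_mem hzA hzB rfl
  have hp2 := p.one_lt_length_of_not_adj hxy hxy'
  have hq2 := q.one_lt_length_of_not_adj hxy hxy'
  -- A chord of this cycle lies within `p` or within `q`, or joins `A` to `B`.
  obtain ⟨a, b, ha, hb, hab, hnot⟩ := hG x _ (hp.isCycle_append hq.reverse hdisj (Or.inl hp2))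
    (by simp only [Walk.length_append, Walk.length_reverse]; omega)
  simp only [Walk.mem_support_append_iff, Walk.support_reverse, List.mem_reverse,
    Walk.edges_append, Walk.edges_reverse, List.mem_append, not_or] at ha hb hnot
  have chord_p : a ∈ p.support → b ∈ p.support → False :=
    fun ha hb => hnot.1 (hpc.mem_edges ha hb hab)
  have chord_q : a ∈ q.support → b ∈ q.support → False :=
    fun ha hb => hnot.2 (hqc.mem_edges ha hb hab)
  rcases ha with ha | ha <;> rcases hb with hb | hb
  · exact chord_p ha hb
  · by_cases ha' : a ∈ q.support
    · exact chord_q ha' hb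
    by_cases hb' : b ∈ p.support
    · exact chord_p ha hb'
    exact hnadj a (only_p a ha ha') b (only_q b hb hb') hab
  · by_cases ha' : a ∈ p.support
    · exact chord_p ha' hb
    by_cases hb' : b ∈ q.support
    · exact chord_q ha hb'
    exact hnadj b (only_p b hb hb') a (only_q a ha ha') hab.symm
  · exact chord_q ha hb

theorem isClique_of_isMinimalSeparator (hG : IsChordalGraph G) {W S : Set V} {a b : V}
    (hS : G.IsMinimalSeparator W S a b) : G.IsClique S := by
  intro u hu v hv huv
  refine hG.adj_of_reachableIn (A := {t | G.ReachableIn (W \ S) a t})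
    (B := {t | G.ReachableIn (W \ S) b t}) huv ?_ ?_
    (hS.reachableIn_insert_insert hu hv) (hS.symm.reachableIn_insert_insert hu hv)
  · exact Set.disjoint_left.2 fun z ha hb => hS.not_reachableIn (ha.trans hb.symm)
  · exact fun z ha w hb hzw => hS.not_reachableIn ((ha.adj hzw hb.mem_right).trans hb.symm)

/-- The clique `K` strengthens the induction: with `K` a clique separator, it yields a simplicial
vertex off the separator. -/
theorem exists_isSimplicialIn_notMem (hG : IsChordalGraph G) (W : Finset V) {K : Set V}
    (hK : G.IsClique K) (hWK : ¬(↑W ⊆ K)) : ∃ v ∈ W, v ∉ K ∧ G.IsSimplicialIn W v := by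
  classical
  induction W using Finset.strongInduction generalizing K with | H W ih => ?_
  by_cases hW : G.IsClique (W : Set V)
  · obtain ⟨v, hvW, hvK⟩ := Set.not_subset.1 hWK
    exact ⟨v, hvW, hvK, hW.subset Set.inter_subset_left⟩
  obtain ⟨a, ha, b, hb, hab, hadj⟩ : ∃ a ∈ W, ∃ b ∈ W, a ≠ b ∧ ¬G.Adj a b := by
    simpa [IsClique, Set.Pairwise] using hW
  obtain ⟨S, hSW, hS⟩ := exists_isMinimalSeparator (G := G) W hab hadj
  have hSK := hG.isClique_of_isMinimalSeparator hS
  have side : ∀ {c d}, c ∈ W → d ∈ W → G.IsMinimalSeparator W S c d →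
      ∃ x, G.ReachableIn (↑W \ ↑S) c x ∧ G.IsSimplicialIn W x := by
    intro c d hc hd hcd
    obtain ⟨A, hAS, hcA, hA⟩ := hcd.exists_component hSW hc hd
    obtain ⟨x, hx, hxS, hsx⟩ :=
      ih _ hAS hSK fun h => hcd.left_notMem (h (Finset.mem_union_left _ hcA))
    have hxA : x ∈ A := (Finset.mem_union.1 hx).resolve_right hxS
    exact ⟨x, (hA x hxA).1, (hA x hxA).2 hsx⟩
  obtain ⟨x, hx, hxs⟩ := side ha hb hS
  obtain ⟨y, hy, hys⟩ := side hb ha hS.symm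
  have hxy : x ≠ y := fun h => hS.not_reachableIn (hx.trans (h ▸ hy.symm))
  have hxy' : ¬G.Adj x y := fun h => hS.not_reachableIn ((hx.adj h hy.mem_right).trans hy.symm)
  by_cases hxK : x ∈ K
  · exact ⟨y, hy.mem_right.1, fun hyK => hxy' (hK hxK hyK hxy), hys⟩
  · exact ⟨x, hx.mem_right.1, hxK, hxs⟩

end IsChordalGraph

namespace Matrix

section Pattern

variable {V R : Type*} [Zero R] {M : Matrix V V R} {s t : Set V} {G : SimpleGraph V}

def IsSupportedOn (M : Matrix V V R) (s : Set V) : Prop :=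
  ∀ i j, ¬(i ∈ s ∧ j ∈ s) → M i j = 0

def HasSparsityPattern (M : Matrix V V R) (G : SimpleGraph V) : Prop :=
  ∀ i j, i ≠ j → ¬G.Adj i j → M i j = 0

lemma IsSupportedOn.mono (hM : M.IsSupportedOn s) (hst : s ⊆ t) : M.IsSupportedOn t :=
  fun i j hij => hM i j fun h => hij ⟨hst h.1, hst h.2⟩

lemma IsSupportedOn.hasSparsityPattern (hM : M.IsSupportedOn s) (hs : G.IsClique s) :
    M.HasSparsityPattern G :=
  fun i j hij hadj => hM i j fun h => hadj (hs h.1 h.2 hij)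

lemma HasSparsityPattern.sub {R : Type*} [SubtractionMonoid R] {M N : Matrix V V R}
    (hM : M.HasSparsityPattern G) (hN : N.HasSparsityPattern G) :
    (M - N).HasSparsityPattern G :=
  fun i j hij hadj => by simp [hM i j hij hadj, hN i j hij hadj]

end Pattern

variable {V : Type*} {X : Matrix V V ℝ} {v : V}

/-- For positive semidefinite `X` with `X v v = 0` this is `0` (as `0⁻¹ = 0`), consistently with
the row `X v` vanishing in that case. -/
noncomputable def pivotTerm (X : Matrix V V ℝ) (v : V) : Matrix V V ℝ :=
  (X v v)⁻¹ • vecMulVec (X v) (X v)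

lemma pivotTerm_isSupportedOn {G : SimpleGraph V} {W : Set V} (hXG : X.HasSparsityPattern G)
    (hXW : X.IsSupportedOn W) (v : V) :
    (X.pivotTerm v).IsSupportedOn (insert v (W ∩ G.neighborSet v)) := by
  have hrow : ∀ i ∉ insert v (W ∩ G.neighborSet v), X v i = 0 := by
    intro i hi
    simp only [Set.mem_insert_iff, Set.mem_inter_iff, SimpleGraph.mem_neighborSet, not_or,
      not_and_or] at hi
    obtain ⟨hiv, hiW | hadj⟩ := hi
    · exact hXW v i fun h => hiW h.2
    · exact hXG v i (Ne.symm hiv) hadj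
  intro i j hij
  rcases not_and_or.1 hij with hi | hj
  · simp [pivotTerm, vecMulVec_apply, hrow i hi]
  · simp [pivotTerm, vecMulVec_apply, hrow j hj]

variable [Fintype V]

lemma PosSemidef.posSemidef_pivotTerm (hX : X.PosSemidef) (v : V) :
    (X.pivotTerm v).PosSemidef := by
  simpa [pivotTerm] using
    (posSemidef_vecMulVec_self_star (X v)).smul (inv_nonneg.2 hX.diag_nonneg)

lemma PosSemidef.apply_eq_zero_of_diag_eq_zero (hX : X.PosSemidef) (h : X v v = 0) (i : V) :
    X v i = 0 := by
  classical
  have := (hX.dotProduct_mulVec_zero_iff (Pi.single v 1)).1 (by simpa [mulVec_single_one] using h)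
  simpa [mulVec_single_one, ← hX.isHermitian.apply v i] using congrFun this i

lemma PosSemidef.sub_pivotTerm_eq_mul_mul_conjTranspose [DecidableEq V] (hX : X.PosSemidef)
    (v : V) :
    X - X.pivotTerm v = (1 - (X v v)⁻¹ • vecMulVec (X v) (Pi.single v 1)) * X *
      (1 - (X v v)⁻¹ • vecMulVec (X v) (Pi.single v 1))ᴴ := by
  have hinv : (X v v)⁻¹ * X v v * (X v v)⁻¹ = (X v v)⁻¹ := by
    simpa using mul_inv_mul_cancel (X v v)⁻¹
  ext i j
  have hi : X i v = X v i := by simpa using hX.isHermitian.apply v i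
  simp [pivotTerm, Matrix.mul_apply, sub_mul, mul_sub, Finset.sum_sub_distrib, vecMulVec_apply,
    Pi.single_apply, one_apply, hi]
  linear_combination -(X v i * X v j) * hinv

lemma PosSemidef.sub_pivotTerm (hX : X.PosSemidef) (v : V) :
    (X - X.pivotTerm v).PosSemidef := by
  classical
  rw [hX.sub_pivotTerm_eq_mul_mul_conjTranspose v]
  exact hX.mul_mul_conjTranspose_same _

lemma PosSemidef.sub_pivotTerm_apply_left (hX : X.PosSemidef) (v j : V) :
    (X - X.pivotTerm v) v j = 0 := by
  by_cases h : X v v = 0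
  · simp [pivotTerm, h, hX.apply_eq_zero_of_diag_eq_zero h j]
  · simp [pivotTerm, vecMulVec_apply, h]

lemma PosSemidef.sub_pivotTerm_apply_right (hX : X.PosSemidef) (i v : V) :
    (X - X.pivotTerm v) i v = 0 := by
  simpa [hX.sub_pivotTerm_apply_left] using ((hX.sub_pivotTerm v).isHermitian.apply i v).symm

lemma PosSemidef.sub_pivotTerm_isSupportedOn {W : Set V} (hX : X.PosSemidef)
    (hXW : X.IsSupportedOn W) (hPW : (X.pivotTerm v).IsSupportedOn W) :
    (X - X.pivotTerm v).IsSupportedOn (W \ {v}) := by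
  intro i j hij
  by_cases hi : i = v
  · exact hi ▸ hX.sub_pivotTerm_apply_left i j
  by_cases hj : j = v
  · exact hj ▸ hX.sub_pivotTerm_apply_right i j
  have hij : ¬(i ∈ W ∧ j ∈ W) := fun h => hij ⟨⟨h.1, hi⟩, ⟨h.2, hj⟩⟩
  simp [hXW i j hij, hPW i j hij]

end Matrix

def SimpleGraph.cliqueSupportedPSD {V : Type*} [Fintype V] (G : SimpleGraph V) :
    Set (Matrix V V ℝ) :=
  {M | M.PosSemidef ∧ ∃ s : Set V, G.IsClique s ∧ M.IsSupportedOn s}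

theorem IsChordalGraph.mem_closure_cliqueSupportedPSD {V : Type*} [Fintype V]
    {G : SimpleGraph V} (hG : IsChordalGraph G) {X : Matrix V V ℝ} (hX : X.PosSemidef)
    (hXG : X.HasSparsityPattern G) : X ∈ AddSubmonoid.closure G.cliqueSupportedPSD := by
  classical
  suffices ∀ W : Finset V, X.IsSupportedOn W →
      X ∈ AddSubmonoid.closure G.cliqueSupportedPSD from
    this Finset.univ fun i j h => absurd ⟨Finset.mem_univ i, Finset.mem_univ j⟩ h
  intro W hXW
  induction W using Finset.strongInduction generalizing X with | H W ih => ?_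
  rcases W.eq_empty_or_nonempty with rfl | hW
  · obtain rfl : X = 0 := by ext i j; exact hXW i j (by simp)
    exact zero_mem _
  obtain ⟨v, hvW, -, hv⟩ := hG.exists_isSimplicialIn_notMem W SimpleGraph.isClique_empty
    (by simpa [Set.subset_empty_iff] using hW.ne_empty)
  have hPv := pivotTerm_isSupportedOn hXG hXW v
  have hvW' : insert v (↑W ∩ G.neighborSet v) ⊆ (W : Set V) :=
    Set.insert_subset hvW Set.inter_subset_left
  have hclique : G.IsClique (insert v (↑W ∩ G.neighborSet v)) :=
    SimpleGraph.isClique_insert.2 ⟨hv, fun w hw _ => hw.2⟩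
  rw [← sub_add_cancel X (X.pivotTerm v)]
  refine add_mem (ih _ (Finset.erase_ssubset hvW) (hX.sub_pivotTerm v)
    (hXG.sub (hPv.hasSparsityPattern hclique)) ?_)
    (AddSubmonoid.subset_closure ⟨hX.posSemidef_pivotTerm v, _, hclique, hPv⟩)
  rw [Finset.coe_erase]
  exact hX.sub_pivotTerm_isSupportedOn hXW (hPv.mono hvW')

lemma exists_isMaximalClique_superset {V : Type*} [Fintype V] {G : SimpleGraph V} {s : Set V}
    (hs : G.IsClique s) : ∃ T : Finset V, IsMaximalClique G T ∧ s ⊆ T := by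
  classical
  obtain ⟨T, hsT, hT⟩ := (Finset.univ.filter fun t : Finset V => G.IsClique t).exists_le_maximal
    (a := s.toFinset) (by simpa using hs)
  refine ⟨T, ⟨(Finset.mem_filter.1 hT.prop).2, fun t ht hTt =>
    le_antisymm (hT.le_of_ge (by simpa using ht) hTt) hTt⟩, ?_⟩
  simpa using hsT

lemma exists_sum_of_mem_closure_cliqueSupportedPSD {V ι : Type*} [Fintype V] [Fintype ι]
    {G : SimpleGraph V} {C : ι → Finset V}
    (hC : ∀ S : Finset V, IsMaximalClique G S → ∃ k, C k = S) {X : Matrix V V ℝ}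
    (hX : X ∈ AddSubmonoid.closure G.cliqueSupportedPSD) :
    ∃ Xk : ι → Matrix V V ℝ,
      (∀ k, (Xk k).PosSemidef) ∧ (∀ k, (Xk k).IsSupportedOn (C k)) ∧ X = ∑ k, Xk k := by
  classical
  induction hX using AddSubmonoid.closure_induction with
  | mem M hM =>
    obtain ⟨hM, s, hs, hMs⟩ := hM
    obtain ⟨T, hT, hsT⟩ := exists_isMaximalClique_superset hs
    obtain ⟨k, rfl⟩ := hC T hT
    refine ⟨Pi.single k M, fun k' => ?_, fun k' => ?_, (Fintype.sum_pi_single' k M).symm⟩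
    · by_cases h : k' = k
      · subst h; simpa using hM
      · simpa [h] using PosSemidef.zero
    · by_cases h : k' = k
      · subst h; simpa using hMs.mono hsT
      · simp [h, IsSupportedOn]
  | zero => exact ⟨0, fun _ => PosSemidef.zero, fun _ _ _ _ => rfl, by simp⟩
  | add X Y _ _ hX hY =>
    obtain ⟨Xk, hXk, hXs, rfl⟩ := hX
    obtain ⟨Yk, hYk, hYs, rfl⟩ := hY
    refine ⟨Xk + Yk, fun k => (hXk k).add (hYk k), fun k i j hij => ?_, ?_⟩
    · simp [hXs k i j hij, hYs k i j hij]
    · simp [Finset.sum_add_distrib]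

theorem chordal_sparse_psd_decomposition_general
    (n : ℕ) (G : SimpleGraph (Fin n)) (hG : IsChordalGraph G)
    (p : ℕ) (C : Fin p → Finset (Fin n))
    (hCall : ∀ S : Finset (Fin n), IsMaximalClique G S → ∃ k, C k = S)
    (X : Matrix (Fin n) (Fin n) ℝ)
    (hXsparse : ∀ i j, i ≠ j → ¬G.Adj i j → X i j = 0) :
    X.PosSemidef ↔
      ∃ Xk : Fin p → Matrix (Fin n) (Fin n) ℝ,
        (∀ k, (Xk k).PosSemidef) ∧
        (∀ k, ∀ i j : Fin n, ¬(i ∈ C k ∧ j ∈ C k) → Xk k i j = 0) ∧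
        X = ∑ k, Xk k := by
  constructor
  · intro hX
    exact exists_sum_of_mem_closure_cliqueSupportedPSD hCall
      (hG.mem_closure_cliqueSupportedPSD hX hXsparse)
  · rintro ⟨Xk, hXk, -, rfl⟩
    exact posSemidef_sum _ fun k _ => hXk k

/-- Chordal decomposition of sparse PSD matrices: let `G` be a
chordal graph on `{1,…,n}` with maximal cliques `C_1, …, C_p`, and let `X` be a
symmetric matrix with sparsity pattern `G` (i.e. `X i j = 0` whenever `i ≠ j`
and `{i,j}` is not an edge of `G`). Then `X` is PSD iff `X = ∑_k X_k` for PSD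
matrices `X_k` whose entries vanish outside `C_k × C_k`. -/
theorem chordal_sparse_psd_decomposition
    (n : ℕ) (G : SimpleGraph (Fin n)) (hG : IsChordalGraph G)
    (p : ℕ) (C : Fin p → Finset (Fin n))
    (hC : ∀ k, IsMaximalClique G (C k))
    (hCall : ∀ S : Finset (Fin n), IsMaximalClique G S → ∃ k, C k = S)
    (X : Matrix (Fin n) (Fin n) ℝ) (hXsym : Xᵀ = X)
    (hXsparse : ∀ i j, i ≠ j → ¬G.Adj i j → X i j = 0) :
    X.PosSemidef ↔
      ∃ Xk : Fin p → Matrix (Fin n) (Fin n) ℝ,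
        (∀ k, (Xk k).PosSemidef) ∧
        (∀ k, ∀ i j : Fin n, ¬(i ∈ C k ∧ j ∈ C k) → Xk k i j = 0) ∧
        X = ∑ k, Xk k :=
  chordal_sparse_psd_decomposition_general n G hG p C hCall X hXsparse
end
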